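/- arXiv:1712.09741 — 6 statements merged into one kernel-verified Lean document; each statement's English description precedes it below -/
import Mathlib

section
/- Let λ₁,…,λ_N > 0 and λ* ∈ [0,1] satisfy ∑_i ( (1−λ_i)/(λ* + (1−λ*)λ_i) + ln λ_i ) = 0. Then the common value D(Σ_{λ*}‖Σ₁') = D(Σ_{λ*}‖Σ₂') equals (1/2)∑_i ln( (1−λ*)√λ_i + λ*/√λ_i ) + (1/2)(λ* − 1/2) ln β, where β = ∏_i λ_i, Σ₁' = diag(λ_i), Σ₂' = I, and Σ_{λ*}⁻¹ = λ*Σ₁'⁻¹ + (1−λ*)Σ₂'⁻¹. -/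
/-!
All three covariances are diagonal: with `dᵢ = λ* + (1 - λ*) λᵢ` one has `Σ_λ* = diag(λᵢ / dᵢ)`,
and the Gaussian divergence splits over coordinates into
`D(Σ_λ*‖Σ₁') = ½ ∑ (log dᵢ + (1 - λ*) (1 - λᵢ) / dᵢ)` and
`D(Σ_λ*‖Σ₂') = ½ ∑ (log dᵢ - log λᵢ - λ* (1 - λᵢ) / dᵢ)`.
Their difference is half the sum in the hypothesis, hence zero; that hypothesis also turns
`∑ (1 - λᵢ) / dᵢ` into `-log β`, and `(1 - λ*) √λᵢ + λ* / √λᵢ = dᵢ / √λᵢ` gives the closed form.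
-/

open Matrix Real Finset

theorem Matrix.inv_diagonal_of_ne_zero {n K : Type*} [Fintype n] [DecidableEq n] [Field K]
    {v : n → K} (hv : ∀ i, v i ≠ 0) : (diagonal v)⁻¹ = diagonal v⁻¹ :=
  inv_eq_right_inv <| by
    rw [diagonal_mul_diagonal, ← diagonal_one]
    exact congrArg diagonal (funext fun i => mul_inv_cancel₀ (hv i))

section GaussianKL

variable {ι : Type*} [Fintype ι] [DecidableEq ι]

/-- Kullback–Leibler divergence `D(𝒩(0, A) ‖ 𝒩(0, B))`. -/
noncomputable def gaussianKL (A B : Matrix ι ι ℝ) : ℝ :=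
  (1 / 2) * log (B.det / A.det) + (1 / 2) * (B⁻¹ * A).trace - Fintype.card ι / 2

theorem gaussianKL_diagonal {a b : ι → ℝ} (ha : ∀ i, 0 < a i) (hb : ∀ i, 0 < b i) :
    gaussianKL (diagonal a) (diagonal b) = (1 / 2) * ∑ i, (log (b i / a i) + a i / b i - 1) := by
  have hprod : ∀ {c : ι → ℝ}, (∀ i, 0 < c i) → (∏ i, c i) ≠ 0 :=
    fun hc => (prod_pos fun i _ => hc i).ne'
  rw [gaussianKL, det_diagonal, det_diagonal, inv_diagonal_of_ne_zero fun i => (hb i).ne',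
    diagonal_mul_diagonal, trace_diagonal, log_div (hprod hb) (hprod ha),
    log_prod fun i _ => (hb i).ne', log_prod fun i _ => (ha i).ne']
  simp only [fun i => log_div (hb i).ne' (ha i).ne', Pi.inv_apply, inv_mul_eq_div, sum_sub_distrib,
    sum_add_distrib, sum_const, card_univ, nsmul_eq_mul, mul_one]
  ring

theorem inv_smul_inv_add_smul_inv_diagonal {a b : ι → ℝ} (t : ℝ) (ha : ∀ i, a i ≠ 0)
    (hb : ∀ i, b i ≠ 0) (hab : ∀ i, t * b i + (1 - t) * a i ≠ 0) :
    (t • (diagonal a)⁻¹ + (1 - t) • (diagonal b)⁻¹)⁻¹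
      = diagonal fun i => a i * b i / (t * b i + (1 - t) * a i) := by
  have hsum : ∀ i, t * (a i)⁻¹ + (1 - t) * (b i)⁻¹ = (t * b i + (1 - t) * a i) / (a i * b i) := by
    intro i
    field_simp [ha i, hb i]
  rw [inv_diagonal_of_ne_zero ha, inv_diagonal_of_ne_zero hb, ← diagonal_smul, ← diagonal_smul,
    diagonal_add]
  simp only [Pi.smul_apply, Pi.inv_apply, smul_eq_mul, hsum]
  rw [inv_diagonal_of_ne_zero fun i => div_ne_zero (hab i) (mul_ne_zero (ha i) (hb i))]
  congr 1
  ext i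
  exact inv_div _ _

end GaussianKL

theorem Real.log_mul_sqrt_add_div_sqrt {x : ℝ} (hx : 0 < x) {s t : ℝ} (h : t + s * x ≠ 0) :
    log (s * √x + t / √x) = log (t + s * x) - log x / 2 := by
  have hsqrt : 0 < √x := sqrt_pos.2 hx
  have hsplit : s * √x + t / √x = (t + s * x) / √x := by
    field_simp
    rw [sq_sqrt hx.le]
    ring
  rw [hsplit, log_div h hsqrt.ne', log_sqrt hx.le]

theorem stmt_7 (N : ℕ) (l : Fin N → ℝ) (hl : ∀ i, 0 < l i) (ls : ℝ)
    (hls : ls ∈ Set.Icc (0:ℝ) 1)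
    (heq : ∑ i, ((1 - l i)/(ls + (1-ls)*l i) + Real.log (l i)) = 0) :
    let S1 : Matrix (Fin N) (Fin N) ℝ := Matrix.diagonal l
    let S2 : Matrix (Fin N) (Fin N) ℝ := 1
    let Slam := (ls • S1⁻¹ + (1-ls) • S2⁻¹)⁻¹
    let D : Matrix (Fin N) (Fin N) ℝ → Matrix (Fin N) (Fin N) ℝ → ℝ :=
      fun A B => (1/2)*Real.log (B.det / A.det) + (1/2)*(B⁻¹ * A).trace - N/2
    D Slam S1 = D Slam S2 ∧
    D Slam S1 = (1/2) * ∑ i, Real.log ((1-ls)*Real.sqrt (l i) + ls/Real.sqrt (l i))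
      + (1/2)*(ls - 1/2)*Real.log (∏ i, l i) := by
  intro S1 S2 Slam D
  obtain ⟨hls0, hls1⟩ := hls
  set d : Fin N → ℝ := fun i => ls + (1 - ls) * l i
  have hd : ∀ i, 0 < d i := fun i => by
    simpa using convex_Ioi (0 : ℝ) one_pos (hl i) hls0 (sub_nonneg.2 hls1) (add_sub_cancel ls 1)
  have hS2 : S2 = diagonal 1 := diagonal_one.symm
  have hSlam : Slam = diagonal fun i => l i / d i := by
    change (ls • (diagonal l)⁻¹ + (1 - ls) • (diagonal 1)⁻¹)⁻¹ = _
    rw [inv_smul_inv_add_smul_inv_diagonal (b := 1) ls (fun i => (hl i).ne') (fun _ => one_ne_zero)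
      (by simpa using fun i => (hd i).ne')]
    simp only [Pi.one_apply, mul_one, d]
  have hD : ∀ A B, D A B = gaussianKL A B := fun A B => by simp only [D, gaussianKL, Fintype.card_fin]
  have hD1 : D Slam S1 = (1 / 2) * ∑ i, (log (d i) + (1 - ls) * ((1 - l i) / d i)) := by
    rw [hD, hSlam, gaussianKL_diagonal (fun i => div_pos (hl i) (hd i)) hl]
    congr 1
    refine sum_congr rfl fun i _ => ?_
    field_simp [(hl i).ne', (hd i).ne']
    ring
  have hD2 : D Slam S2 = (1 / 2) * ∑ i, (log (d i) - log (l i) - ls * ((1 - l i) / d i)) := by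
    rw [hD, hSlam, hS2, gaussianKL_diagonal (b := 1) (fun i => div_pos (hl i) (hd i)) fun _ => one_pos]
    congr 1
    refine sum_congr rfl fun i _ => ?_
    rw [Pi.one_apply, one_div_div, log_div (hd i).ne' (hl i).ne']
    field_simp [(hl i).ne', (hd i).ne']
    ring
  have hlog : ∀ i, log ((1 - ls) * √(l i) + ls / √(l i)) = log (d i) - log (l i) / 2 :=
    fun i => log_mul_sqrt_add_div_sqrt (hl i) (hd i).ne'
  have hcrit : ∑ i, ((1 - l i) / d i + log (l i)) = 0 := heq
  simp only [hlog, sum_add_distrib, sum_sub_distrib, ← mul_sum, ← sum_div] at hcrit hD1 hD2 ⊢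
  rw [log_prod fun i _ => (hl i).ne', hD1, hD2]
  constructor
  · linear_combination (1 / 2) * hcrit
  · linear_combination (1 - ls) / 2 * hcrit
end

section
/- Let Σ be the covariance matrix of a normalized Gaussian tree G = (V,E,W) on N nodes (unit diagonal, σ_ij the product of edge weights along the unique path from i to j). Then det Σ = ∏_{e_ij ∈ E} (1 − w_ij²). -/
/-!
Induction on the number of vertices, removing a leaf `v` with neighbour `u`. Every path from `v`
to a vertex `j ≠ v` starts with the edge `vu`, so off the diagonal row `v` of `Σ` is `w_vu` times
row `u`. Subtracting that multiple of row `u` leaves `1 - w_vu w_uv` as the only nonzero entry of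
row `v`, hence `det Σ = (1 - w_vu w_uv) · det Σ'`, where `Σ'` is the matrix of the tree `G - v`.
-/

open Finset

namespace Matrix

variable {n R : Type*} [Fintype n] [DecidableEq n] [CommRing R]

theorem det_eq_mul_det_submatrix_compl_of_row_eq_zero (M : Matrix n n R) {v : n}
    (hrow : ∀ j ≠ v, M v j = 0) :
    M.det = M v v * (M.submatrix ((↑) : ({v}ᶜ : Set n) → n) (↑)).det := by
  let e := Equiv.sumCompl (· ∈ ({v}ᶜ : Set n))
  let : Unique {x // x ∉ ({v}ᶜ : Set n)} :=
    ⟨⟨⟨v, by simp⟩⟩, fun ⟨x, hx⟩ => Subtype.ext (by simpa using hx)⟩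
  rw [← det_submatrix_equiv_self e, ← fromBlocks_toBlocks (M.submatrix e e)]
  have h21 : (M.submatrix e e).toBlocks₂₁ = 0 := by
    ext ⟨i, hi⟩ ⟨j, hj⟩
    simp only [Set.mem_compl_iff, Set.mem_singleton_iff, not_not] at hi hj
    subst hi
    exact hrow j hj
  rw [h21, det_fromBlocks_zero₂₁, det_unique (M.submatrix e e).toBlocks₂₂, mul_comm]
  rfl

theorem det_eq_mul_det_submatrix_compl_of_row_eq_smul (M : Matrix n n R) {u v : n}
    (huv : u ≠ v) (c : R) (hrow : ∀ j ≠ v, M v j = c * M u j) :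
    M.det = (M v v - c * M u v) * (M.submatrix ((↑) : ({v}ᶜ : Set n) → n) (↑)).det := by
  rw [← det_updateRow_add_smul_self M huv.symm (-c),
    det_eq_mul_det_submatrix_compl_of_row_eq_zero _ (v := v) fun j hj => by simp [hrow j hj]]
  congr 1
  · simp [sub_eq_add_neg]
  · congr 1
    ext i j
    simp [updateRow_ne i.2]

end Matrix

namespace SimpleGraph

variable {V R : Type*} [CommRing R] {G : SimpleGraph V}

def IsPathWeightMatrix (G : SimpleGraph V) (w : V → V → R) (M : Matrix V V R) : Prop :=
  ∀ i j (p : G.Walk i j), p.IsPath → M i j = (p.darts.map fun d => w d.fst d.snd).prod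

namespace IsPathWeightMatrix

variable {w : V → V → R} {M : Matrix V V R}

theorem apply_self (hM : G.IsPathWeightMatrix w M) (i : V) : M i i = 1 := by
  simpa using hM i i .nil .nil

theorem apply_of_adj (hM : G.IsPathWeightMatrix w M) {i j : V} (h : G.Adj i j) :
    M i j = w i j := by
  simpa using hM i j (.cons h .nil) (by simp [h.ne])

theorem apply_leaf (hM : G.IsPathWeightMatrix w M) (hG : G.Connected) {u v : V}
    (hvu : G.Adj v u) (hleaf : ∀ x, G.Adj v x → x = u) {j : V} (hj : j ≠ v) :
    M v j = w v u * M u j := by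
  obtain ⟨p, hp⟩ := hG.exists_isPath u j
  have hvp : v ∉ p.support :=
    hp.isTrail.not_mem_support_of_subsingleton_neighborSet hvu.ne hj.symm
      fun x hx y hy => (hleaf x hx).trans (hleaf y hy).symm
  simpa [hM u j p hp] using hM v j (.cons hvu p) (hp.cons hvp)

theorem induce (hM : G.IsPathWeightMatrix w M) (s : Set V) :
    (G.induce s).IsPathWeightMatrix (fun a b => w a b) (M.submatrix (↑) (↑)) := by
  intro i j p hp
  have := hM _ _ (p.map (Embedding.induce s).toHom) (hp.map Subtype.val_injective)
  rwa [Walk.darts_map, List.map_map] at this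

end IsPathWeightMatrix

variable [Fintype V] [DecidableEq V] [DecidableRel G.Adj]

theorem map_edgeFinset_induce_compl_singleton (v : V) :
    (G.induce {v}ᶜ).edgeFinset.map
        (Function.Embedding.subtype (· ∈ ({v}ᶜ : Set V))).sym2Map =
      G.edgeFinset \ G.incidenceFinset v := by
  rw [map_edgeFinset_induce]
  ext e
  induction e using Sym2.ind with
  | h a b => grind [mem_incidenceFinset, incidenceSet, mem_edgeFinset]

theorem prod_edgeFinset_eq_prod_incidenceFinset_mul {M : Type*} [CommMonoid M]
    (f : Sym2 V → M) (v : V) :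
    ∏ e ∈ G.edgeFinset, f e =
      (∏ e ∈ G.incidenceFinset v, f e) *
        ∏ e ∈ (G.induce {v}ᶜ).edgeFinset, f (e.map (↑)) := by
  rw [← prod_sdiff (G.incidenceFinset_subset v), ← map_edgeFinset_induce_compl_singleton,
    prod_map, mul_comm]
  rfl

theorem incidenceFinset_eq_singleton {u v : V} (hvu : G.Adj v u) (hv : G.degree v = 1) :
    G.incidenceFinset v = {s(v, u)} := by
  obtain ⟨e, he⟩ := card_eq_one.mp ((G.card_incidenceFinset_eq_degree v).trans hv)
  have hmem : s(v, u) ∈ G.incidenceFinset v :=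
    (G.mem_incidenceFinset v _).mpr (G.mk'_mem_incidenceSet_left_iff.mpr hvu)
  rw [he, mem_singleton] at hmem
  rw [he, hmem]

theorem IsTree.det_eq_prod_edgeFinset (hG : G.IsTree) {w : V → V → R} {M : Matrix V V R}
    (hM : G.IsPathWeightMatrix w M) :
    M.det = ∏ e ∈ G.edgeFinset,
      Sym2.lift ⟨fun a b => 1 - w a b * w b a, fun a b => by ring⟩ e := by
  induction h : Fintype.card V using Nat.strong_induction_on generalizing V with
  | _ n IH =>
  rcases subsingleton_or_nontrivial V with hV | hV
  · have hM1 : M = 1 := by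
      ext i j
      rw [Subsingleton.elim i j, Matrix.one_apply_eq, hM.apply_self]
    rw [hM1, Matrix.det_one, eq_comm]
    refine prod_eq_one fun e he => ?_
    induction e using Sym2.ind with
    | h a b => exact ((mem_edgeFinset.mp he).ne (Subsingleton.elim a b)).elim
  · obtain ⟨v, hv⟩ := hG.exists_vert_degree_one_of_nontrivial
    obtain ⟨u, hvu, hleaf⟩ := degree_eq_one_iff_existsUnique_adj.mp hv
    have hG' : (G.induce {v}ᶜ).IsTree :=
      ⟨hG.connected.induce_compl_singleton_of_degree_eq_one hv, hG.isAcyclic.induce _⟩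
    rw [M.det_eq_mul_det_submatrix_compl_of_row_eq_smul hvu.ne' (w v u)
        fun j hj => hM.apply_leaf hG.connected hvu hleaf hj,
      IH _ (h ▸ Fintype.card_subtype_lt (x := v) (by simp)) hG' (hM.induce _) rfl,
      prod_edgeFinset_eq_prod_incidenceFinset_mul _ v, incidenceFinset_eq_singleton hvu hv,
      prod_singleton, hM.apply_self, hM.apply_of_adj hvu.symm]
    congr 1
    refine prod_congr rfl fun e _ => ?_
    induction e using Sym2.ind with
    | h a b => rfl

end SimpleGraph

theorem stmt_10 (N : ℕ) (G : SimpleGraph (Fin N)) [DecidableRel G.Adj]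
    (hG : G.IsTree) (w : Fin N → Fin N → ℝ)
    (Cov : Matrix (Fin N) (Fin N) ℝ)
    (hCov : ∀ i j (p : G.Walk i j), p.IsPath →
      Cov i j = (p.darts.map (fun d => w d.toProd.1 d.toProd.2)).prod) :
    Cov.det = ∏ e ∈ G.edgeFinset,
      Sym2.lift ⟨fun a b => 1 - w a b * w b a, fun a b => by ring⟩ e :=
  hG.det_eq_prod_edgeFinset hCov
end

section
/- Let Σ be the covariance matrix of a normalized Gaussian tree G = (V,E,W). Then Σ⁻¹ = [u_ij] with u_ij = −w_ij/(1−w_ij²) if e_ij ∈ E, u_ij = 0 if i ≠ j and e_ij ∉ E, and u_ii = 1 + ∑_{p: e_ip ∈ E} w_ip²/(1−w_ip²). -/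
theorem stmt_11 (N : ℕ) (G : SimpleGraph (Fin N)) [DecidableRel G.Adj]
    (hG : G.IsTree) (w : Fin N → Fin N → ℝ)
    (hsymm : ∀ i j, w i j = w j i)
    (hw : ∀ i j, G.Adj i j → w i j ∈ Set.Ioo (-1:ℝ) 1)
    (Cov : Matrix (Fin N) (Fin N) ℝ)
    (hCov : ∀ i j (p : G.Walk i j), p.IsPath →
      Cov i j = (p.darts.map (fun d => w d.toProd.1 d.toProd.2)).prod) :
    Cov⁻¹ = Matrix.of (fun i j =>
      if i = j then 1 + ∑ p ∈ G.neighborFinset i, (w i p)^2 / (1 - (w i p)^2)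
      else if G.Adj i j then -(w i j) / (1 - (w i j)^2)
      else 0) := by
  classical
  have hpath := hG.existsUnique_path
  have hCovii : ∀ i, Cov i i = 1 := by
    intro i
    simpa using hCov i i SimpleGraph.Walk.nil (by simp)
  have hCovAdj : ∀ i p, G.Adj i p → Cov i p = w i p := by
    intro i p h
    have hpth : (SimpleGraph.Walk.cons h SimpleGraph.Walk.nil).IsPath := by
      simp [SimpleGraph.Walk.cons_isPath_iff, h.ne]
    simpa using hCov i p (SimpleGraph.Walk.cons h SimpleGraph.Walk.nil) hpth
  apply Matrix.inv_eq_right_inv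
  ext i j
  rw [Matrix.mul_apply, Matrix.one_apply]
  have hvanish : ∀ k ∈ (Finset.univ : Finset (Fin N)),
      k ∉ insert j (G.neighborFinset j) →
      Cov i k * Matrix.of (fun i j =>
        if i = j then 1 + ∑ p ∈ G.neighborFinset i, (w i p)^2 / (1 - (w i p)^2)
        else if G.Adj i j then -(w i j) / (1 - (w i j)^2)
        else 0) k j = 0 := by
    intro k _ hk
    simp only [Finset.mem_insert, SimpleGraph.mem_neighborFinset, not_or] at hk
    have hkj : k ≠ j := hk.1
    have hadj : ¬ G.Adj k j := fun h => hk.2 h.symm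
    simp [Matrix.of_apply, hkj, hadj]
  rw [← Finset.sum_subset (Finset.subset_univ _) hvanish,
    Finset.sum_insert (G.notMem_neighborFinset_self j)]
  simp only [Matrix.of_apply]
  simp only [if_true]
  have hterm : ∀ p ∈ G.neighborFinset j,
      Cov i p * (if p = j then 1 + ∑ r ∈ G.neighborFinset p, (w p r)^2 / (1 - (w p r)^2)
        else if G.Adj p j then -(w p j) / (1 - (w p j)^2) else 0)
      = Cov i p * (-(w p j) / (1 - (w p j)^2)) := by
    intro p hp
    rw [SimpleGraph.mem_neighborFinset] at hp
    rw [if_neg hp.ne', if_pos hp.symm]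
  rw [Finset.sum_congr rfl hterm]
  by_cases hij : i = j
  · -- diagonal case
    subst hij
    rw [if_pos rfl, hCovii i]
    have hterm2 : ∀ p ∈ G.neighborFinset i,
        Cov i p * (-(w p i) / (1 - (w p i)^2))
        = -((w i p)^2 / (1 - (w i p)^2)) := by
      intro p hp
      rw [SimpleGraph.mem_neighborFinset] at hp
      rw [hCovAdj i p hp, hsymm p i]
      ring
    rw [Finset.sum_congr rfl hterm2, Finset.sum_neg_distrib]
    ring
  · -- off-diagonal case
    rw [if_neg hij]
    obtain ⟨P, hP, hPu⟩ := hpath i j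
    obtain ⟨q, hjq, tail, hrev⟩ := SimpleGraph.Walk.exists_eq_cons_of_ne (Ne.symm hij) P.reverse
    have hPd : P = tail.reverse.concat hjq.symm := by
      rw [← SimpleGraph.Walk.reverse_reverse P, hrev, SimpleGraph.Walk.reverse_cons,
        SimpleGraph.Walk.concat_eq_append]
    have htail : tail.IsPath := by
      have := hP.reverse
      rw [hrev] at this
      exact this.of_cons
    have htailr : tail.reverse.IsPath := htail.reverse
    have hq : Cov i j = Cov i q * w q j := by
      rw [hCov i j P hP, hPd, SimpleGraph.Walk.darts_concat, List.concat_eq_append,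
        List.map_append, List.prod_append, ← hCov i q tail.reverse htailr]
      simp
    have hqmem : q ∈ G.neighborFinset j := by
      rw [SimpleGraph.mem_neighborFinset]; exact hjq
    have hnb : ∀ p ∈ G.neighborFinset j, p ≠ q → Cov i p = Cov i j * w j p := by
      intro p hp hpq
      rw [SimpleGraph.mem_neighborFinset] at hp
      have hps : p ∉ P.support := by
        intro hps
        have hd : (P.dropUntil p hps).IsPath := hP.dropUntil hps
        have hsing : (SimpleGraph.Walk.cons hp.symm SimpleGraph.Walk.nil :
            G.Walk p j).IsPath := by
          simp [SimpleGraph.Walk.cons_isPath_iff, hp.ne']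
        have heq : P.dropUntil p hps =
            SimpleGraph.Walk.cons hp.symm SimpleGraph.Walk.nil :=
          (hpath p j).unique hd hsing
        have h1 : P.darts = (P.takeUntil p hps).darts ++
            [(⟨(p, j), hp.symm⟩ : G.Dart)] := by
          conv_lhs => rw [← P.take_spec hps]
          rw [SimpleGraph.Walk.darts_append, heq]
          simp
        have h2 : P.darts = tail.reverse.darts ++ [(⟨(q, j), hjq.symm⟩ : G.Dart)] := by
          conv_lhs => rw [hPd]
          simp [List.concat_eq_append]
        have h3 := h1.symm.trans h2
        have hlast := congrArg List.getLast? h3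
        rw [List.getLast?_concat, List.getLast?_concat] at hlast
        have : p = q := congrArg (fun d => d.toProd.1) (Option.some.inj hlast)
        exact hpq this
      have hQ : (P.concat hp).IsPath := by
        rw [← SimpleGraph.Walk.isPath_reverse_iff, SimpleGraph.Walk.reverse_concat]
        apply hP.reverse.cons
        rw [SimpleGraph.Walk.support_reverse, List.mem_reverse]
        exact hps
      rw [hCov i p (P.concat hp) hQ, SimpleGraph.Walk.darts_concat, List.concat_eq_append,
        List.map_append, List.prod_append, ← hCov i j P hP]
      simp
    have hqIoo := hw j q hjq
    have hq2 : (w j q)^2 < 1 := by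
      obtain ⟨ha1, ha2⟩ := hqIoo
      nlinarith
    have hc : 1 - (w j q)^2 ≠ 0 := by
      intro h
      nlinarith
    rw [← Finset.sum_erase_add _ _ hqmem, ← Finset.sum_erase_add _ _ hqmem]
    have hsum : ∑ p ∈ (G.neighborFinset j).erase q,
        Cov i p * (-(w p j) / (1 - (w p j)^2))
        = - ∑ p ∈ (G.neighborFinset j).erase q,
            Cov i j * ((w j p)^2 / (1 - (w j p)^2)) := by
      rw [← Finset.sum_neg_distrib]
      apply Finset.sum_congr rfl
      intro p hp
      have hpq : p ≠ q := Finset.ne_of_mem_erase hp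
      have hpmem : p ∈ G.neighborFinset j := Finset.mem_of_mem_erase hp
      rw [hnb p hpmem hpq, hsymm p j]
      ring
    rw [hsum, ← Finset.mul_sum, hq, hsymm q j]
    field_simp
    ring
end

section
/- Let Σ₁ be an N×N matrix and Σ₂⁻¹ be given. Define (N+1)×(N+1) matrices Σ₁' = [[Σ₁, v; vᵀ, 1]] where v is the last column of Σ₁ scaled appropriately so that Σ₁' corresponds to adding a leaf with weight w at node N, and Σ₂'⁻¹ the corresponding block matrix with last row/column (0,…,0, −w/(1−w²), 1/(1−w²)) and the (N,N) entry increased by w²/(1−w²). Then det(λI − Σ₁'Σ₂'⁻¹) = (λ−1)·det(λI − Σ₁Σ₂⁻¹). -/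
/-!
Attaching a leaf with weight `w` to node `k` extends the covariance `S` by `w` times its `k`-th column
and the precision `M` by a rank-one correction supported on `{k, leaf}`. When `S k k = 1` the
correction cancels in the product: `S' * M'` is block lower triangular with diagonal blocks
`S * M` and `1`, so its characteristic polynomial is `(X - 1) * (S * M).charpoly`.
-/

open Matrix Polynomial

section AddLeaf

variable {n K : Type*} [Fintype n] [DecidableEq n] [Field K]

theorem det_smul_one_sub_eq_eval_charpoly (A : Matrix n n K) (t : K) :
    (t • (1 : Matrix n n K) - A).det = A.charpoly.eval t := by
  rw [eval_charpoly, smul_one_eq_diagonal, scalar_apply]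

def addLeafCov (S : Matrix n n K) (k : n) (w : K) : Matrix (n ⊕ Unit) (n ⊕ Unit) K :=
  fromBlocks S (of fun i _ => w * S i k) (of fun _ j => w * S j k) (of fun _ _ => 1)

def addLeafPrec (M : Matrix n n K) (k : n) (w : K) : Matrix (n ⊕ Unit) (n ⊕ Unit) K :=
  fromBlocks (M + single k k (w ^ 2 / (1 - w ^ 2)))
    (of fun i _ => if i = k then -w / (1 - w ^ 2) else 0)
    (of fun _ j => if j = k then -w / (1 - w ^ 2) else 0)
    (of fun _ _ => 1 / (1 - w ^ 2))

theorem addLeafCov_mul_addLeafPrec {S : Matrix n n K} {k : n} {w : K} (hS : S k k = 1)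
    (hw : 1 - w ^ 2 ≠ 0) (M : Matrix n n K) :
    ∃ C, addLeafCov S k w * addLeafPrec M k w = fromBlocks (S * M) 0 C 1 := by
  rw [addLeafCov, addLeafPrec, fromBlocks_multiply]
  refine ⟨_, fromBlocks_inj.2 ⟨?_, ?_, rfl, ?_⟩⟩
  · rw [Matrix.mul_add, add_assoc, add_eq_left]
    ext i j
    rcases eq_or_ne j k with rfl | hj
    · rw [Matrix.add_apply, mul_single_apply_same]
      simp only [mul_apply, Fintype.sum_unique, of_apply, if_pos, Matrix.zero_apply]
      field_simp
      ring
    · rw [Matrix.add_apply, mul_single_apply_of_ne (hbj := hj)]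
      simp [mul_apply, hj]
  · ext i j
    simp only [Matrix.add_apply, mul_apply, Fintype.sum_unique, of_apply, mul_ite, mul_zero,
      Finset.sum_ite_eq', Finset.mem_univ, if_pos, Matrix.zero_apply]
    field_simp
    ring
  · ext i j
    simp only [Matrix.add_apply, mul_apply, Fintype.sum_unique, of_apply, mul_ite, mul_zero,
      Finset.sum_ite_eq', Finset.mem_univ, if_pos, hS, one_apply_eq]
    field_simp
    ring

theorem charpoly_addLeafCov_mul_addLeafPrec {S : Matrix n n K} {k : n} {w : K} (hS : S k k = 1)
    (hw : 1 - w ^ 2 ≠ 0) (M : Matrix n n K) :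
    (addLeafCov S k w * addLeafPrec M k w).charpoly = (X - 1) * (S * M).charpoly := by
  obtain ⟨C, hC⟩ := addLeafCov_mul_addLeafPrec hS hw M
  rw [hC, charpoly_fromBlocks_zero₁₂, charpoly_one, Fintype.card_unit, pow_one, mul_comm]

end AddLeaf

theorem stmt_12 (N : ℕ) (S1 M : Matrix (Fin (N+1)) (Fin (N+1)) ℝ) (w : ℝ)
    (hw : w ∈ Set.Ioo (-1:ℝ) 1)
    (hdiag : S1 (Fin.last N) (Fin.last N) = 1) :
    let v : Fin (N+1) → ℝ := fun i => w * S1 i (Fin.last N)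
    let S1' : Matrix (Fin (N+1) ⊕ Unit) (Fin (N+1) ⊕ Unit) ℝ :=
      Matrix.fromBlocks S1 (Matrix.of fun i _ => v i) (Matrix.of fun _ j => v j)
        (Matrix.of fun _ _ => 1)
    let M' : Matrix (Fin (N+1) ⊕ Unit) (Fin (N+1) ⊕ Unit) ℝ :=
      Matrix.fromBlocks
        (M + Matrix.single (Fin.last N) (Fin.last N) (w^2/(1-w^2)))
        (Matrix.of fun i _ => if i = Fin.last N then -w/(1-w^2) else 0)
        (Matrix.of fun _ j => if j = Fin.last N then -w/(1-w^2) else 0)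
        (Matrix.of fun _ _ => 1/(1-w^2))
    ∀ lam : ℝ,
      (lam • (1 : Matrix (Fin (N+1) ⊕ Unit) (Fin (N+1) ⊕ Unit) ℝ) - S1' * M').det
        = (lam - 1) * (lam • (1 : Matrix (Fin (N+1)) (Fin (N+1)) ℝ) - S1 * M).det := by
  intro _ _ _ lam
  have hw' : 1 - w ^ 2 ≠ 0 := by nlinarith [hw.1, hw.2]
  change (lam • 1 - addLeafCov S1 (Fin.last N) w * addLeafPrec M (Fin.last N) w).det = _
  rw [det_smul_one_sub_eq_eval_charpoly, det_smul_one_sub_eq_eval_charpoly,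
    charpoly_addLeafCov_mul_addLeafPrec hdiag hw', eval_mul, eval_sub, eval_X, eval_one]
end

section
/- Interlacing of generalized eigenvalues under one-dimensional reduction: let A', B' be (symmetric positive definite) N×N matrices and A, B their top-left (N−1)×(N−1) principal submatrices. If λ₁^{(1)} ≤ … ≤ λ_N^{(1)} are the eigenvalues of A'B'⁻¹ and λ₁^{(2)} ≤ … ≤ λ_{N−1}^{(2)} are the eigenvalues of AB⁻¹, then λ_k^{(1)} ≤ λ_k^{(2)} ≤ λ_{k+1}^{(1)} for all 1 ≤ k ≤ N−1. -/
/-!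
For `μ ∈ ℝ`, the number of generalized eigenvalues of `(A', B')` exceeding `μ` is the negative
index of inertia of `μ • B' - A'`: writing `B' = Rᵀ R`, the matrix `μ • B' - A'` is congruent to
`μ - R⁻ᵀ A' R⁻¹`, which the spectral theorem diagonalises, and the inertia is a congruence
invariant. Passing to the principal submatrix `μ • B - A` cannot raise this index and lowers it by
at most one. For monotone enumerations, these two counting inequalities at `μ = λ_k⁽²⁾` and
`μ = λ_{k+1}⁽¹⁾` are exactly the interlacing inequalities.
-/

open Matrix Module Polynomial Finset

theorem Submodule.finrank_add_finrank_le_finrank_comap_add {K V V' : Type*} [DivisionRing K]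
    [AddCommGroup V] [Module K V] [FiniteDimensional K V]
    [AddCommGroup V'] [Module K V'] [FiniteDimensional K V']
    (f : V →ₗ[K] V') (W : Submodule K V') :
    finrank K W + finrank K V ≤ finrank K (W.comap f) + finrank K V' := by
  have hker : W.comap f = LinearMap.ker (W.mkQ ∘ₗ f) := by
    rw [LinearMap.ker_comp, ker_mkQ]
  have hrank := LinearMap.finrank_range_add_finrank_ker (W.mkQ ∘ₗ f)
  have hrange := Submodule.finrank_le (LinearMap.range (W.mkQ ∘ₗ f))
  have hquot := W.finrank_quotient_add_finrank
  rw [hker]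
  omega

theorem LinearMap.mem_ker_funLeft_subtypeVal {K n : Type*} [Semiring K] {p : n → Prop}
    {x : n → K} :
    x ∈ LinearMap.ker (LinearMap.funLeft K K (Subtype.val : {i // p i} → n)) ↔
      ∀ i, p i → x i = 0 := by
  simp [funext_iff]

theorem LinearMap.finrank_ker_funLeft_subtypeVal {K n : Type*} [Field K] [Fintype n]
    (p : n → Prop) [DecidablePred p] :
    finrank K (LinearMap.ker (LinearMap.funLeft K K (Subtype.val : {i // p i} → n))) =
      #{i | ¬ p i} := by
  have hrank := LinearMap.finrank_range_add_finrank_ker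
    (LinearMap.funLeft K K (Subtype.val : {i // p i} → n))
  rw [LinearMap.range_eq_top.2
      (LinearMap.funLeft_surjective_of_injective K K _ Subtype.val_injective),
    finrank_top, finrank_fintype_fun_eq_card, finrank_fintype_fun_eq_card,
    Fintype.card_subtype] at hrank
  have hsplit : #{i | p i} + #{i | ¬ p i} = Fintype.card n :=
    card_filter_add_card_filter_not _
  omega

theorem Polynomial.card_filter_eq_of_prod_X_sub_C_eq {ι R : Type*} [Fintype ι] [CommRing R]
    [IsDomain R] {e ν : ι → R} (h : ∏ i, (X - C (e i)) = ∏ i, (X - C (ν i)))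
    (p : R → Prop) [DecidablePred p] : #{i | p (e i)} = #{i | p (ν i)} := by
  have hroots : univ.val.map e = univ.val.map ν := by
    have := congrArg roots h
    rw [roots_prod _ _ (prod_ne_zero_iff.2 fun i _ => X_sub_C_ne_zero _),
      roots_prod _ _ (prod_ne_zero_iff.2 fun i _ => X_sub_C_ne_zero _)] at this
    simpa using this
  have hcount (f : ι → R) : #{i | p (f i)} = (univ.val.map f).countP p :=
    (Multiset.countP_map _ _ _).symm
  rw [hcount, hcount, hroots]

theorem Monotone.le_card_filter_lt_add_of_lt {n : ℕ} {α : Type*} [Preorder α] [DecidableLT α]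
    {e : Fin n → α} (he : Monotone e) {μ : α} {j : Fin n} (hj : μ < e j) :
    n ≤ #{i | μ < e i} + j := by
  have hsub : Ici j ⊆ ({i | μ < e i} : Finset (Fin n)) := fun i hi =>
    mem_filter.2 ⟨mem_univ i, hj.trans_le (he (mem_Ici.1 hi))⟩
  have := card_le_card hsub
  rw [Fin.card_Ici] at this
  omega

theorem Monotone.card_filter_lt_add_lt_of_le {n : ℕ} {α : Type*} [Preorder α] [DecidableLT α]
    {e : Fin n → α} (he : Monotone e) {μ : α} {j : Fin n} (hj : e j ≤ μ) :
    #{i | μ < e i} + j < n := by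
  have hsub : ({i | μ < e i} : Finset (Fin n)) ⊆ Ioi j := fun i hi =>
    mem_Ioi.2 (lt_of_not_ge fun hij => ((mem_filter.1 hi).2.trans_le ((he hij).trans hj)).false)
  have := card_le_card hsub
  rw [Fin.card_Ioi] at this
  omega

namespace Matrix

variable {m n : Type*} [Fintype n]

section CommSemiring

variable {R : Type*} [CommSemiring R]

theorem transpose_mul_mul_submatrix_one [DecidableEq n] (M : Matrix n n R) (f : m → n) :
    ((1 : Matrix n n R).submatrix id f)ᵀ * M * (1 : Matrix n n R).submatrix id f =
      M.submatrix f f := by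
  ext i j
  simp [mul_apply, one_apply]

theorem mulVec_submatrix_one_injective [Fintype m] [DecidableEq m] [DecidableEq n] {f : m → n}
    (hf : Function.Injective f) :
    Function.Injective ((1 : Matrix n n R).submatrix id f).mulVec := by
  have hleft : ((1 : Matrix n n R).submatrix id f)ᵀ * (1 : Matrix n n R).submatrix id f = 1 := by
    simpa [submatrix_one f hf] using transpose_mul_mul_submatrix_one (1 : Matrix n n R) f
  intro x y hxy
  have := congrArg (((1 : Matrix n n R).submatrix id f)ᵀ *ᵥ ·) hxy
  simpa only [mulVec_mulVec, hleft, one_mulVec] using this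

theorem dotProduct_transpose_mul_mul_mulVec [Fintype m] (L : Matrix n m R) (M : Matrix n n R)
    (y : m → R) : y ⬝ᵥ (Lᵀ * M * L) *ᵥ y = (L *ᵥ y) ⬝ᵥ M *ᵥ (L *ᵥ y) := by
  rw [← mulVec_mulVec, ← mulVec_mulVec, dotProduct_mulVec, vecMul_transpose]

theorem dotProduct_diagonal_mulVec [DecidableEq n] (d x : n → R) :
    x ⬝ᵥ diagonal d *ᵥ x = ∑ i, d i * x i ^ 2 := by
  simp only [dotProduct, mulVec_diagonal]
  exact sum_congr rfl fun i _ => by ring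

end CommSemiring

def NegDefOn (M : Matrix n n ℝ) (W : Submodule ℝ (n → ℝ)) : Prop :=
  ∀ x ∈ W, x ≠ 0 → x ⬝ᵥ M *ᵥ x < 0

/-- `k` is the negative index of inertia of `M`. -/
def IsNegIndex (M : Matrix n n ℝ) (k : ℕ) : Prop :=
  (∃ W, NegDefOn M W ∧ k ≤ finrank ℝ W) ∧ ∀ W, NegDefOn M W → finrank ℝ W ≤ k

namespace NegDefOn

variable [Fintype m] {L : Matrix n m ℝ} {M : Matrix n n ℝ}

theorem map {W : Submodule ℝ (m → ℝ)} (h : NegDefOn (Lᵀ * M * L) W) :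
    NegDefOn M (W.map L.mulVecLin) := by
  rintro _ ⟨y, hy, rfl⟩ hLy
  rw [mulVecLin_apply, ← dotProduct_transpose_mul_mul_mulVec]
  exact h y hy (by rintro rfl; simp at hLy)

theorem comap (hL : Function.Injective L.mulVec) {W : Submodule ℝ (n → ℝ)}
    (h : NegDefOn M W) : NegDefOn (Lᵀ * M * L) (W.comap L.mulVecLin) := by
  intro y hy hy0
  rw [dotProduct_transpose_mul_mul_mulVec]
  exact h _ hy fun h0 => hy0 (hL (h0.trans (mulVec_zero L).symm))

end NegDefOn

theorem isNegIndex_diagonal [DecidableEq n] (d : n → ℝ) :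
    IsNegIndex (diagonal d) #{i | d i < 0} := by
  refine ⟨⟨LinearMap.ker (LinearMap.funLeft ℝ ℝ (Subtype.val : {i // 0 ≤ d i} → n)), ?_, ?_⟩, ?_⟩
  · intro x hx hx0
    rw [LinearMap.mem_ker_funLeft_subtypeVal] at hx
    obtain ⟨i, hi⟩ := Function.ne_iff.1 hx0
    have hdi : d i < 0 := lt_of_not_ge fun hdi => hi (hx i hdi)
    rw [dotProduct_diagonal_mulVec]
    refine sum_neg' (fun j _ => ?_)
      ⟨i, mem_univ i, mul_neg_of_neg_of_pos hdi (sq_pos_of_ne_zero hi)⟩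
    rcases le_or_gt 0 (d j) with hj | hj
    · simp [hx j hj]
    · exact mul_nonpos_of_nonpos_of_nonneg hj.le (sq_nonneg _)
  · simp [LinearMap.finrank_ker_funLeft_subtypeVal]
  · intro W hW
    set K := LinearMap.ker (LinearMap.funLeft ℝ ℝ (Subtype.val : {i // d i < 0} → n))
    -- the form is positive semidefinite on `K`
    have hdisj : Disjoint W K := by
      refine Submodule.disjoint_def.2 fun x hxW hxK => by_contra fun hx0 => ?_
      rw [LinearMap.mem_ker_funLeft_subtypeVal] at hxK
      have hneg := hW x hxW hx0
      rw [dotProduct_diagonal_mulVec] at hneg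
      refine hneg.not_ge (sum_nonneg fun j _ => ?_)
      rcases lt_or_ge (d j) 0 with hj | hj
      · simp [hxK j hj]
      · positivity
    have hK : finrank ℝ K = #{i | ¬ d i < 0} := LinearMap.finrank_ker_funLeft_subtypeVal _
    have hsum := Submodule.finrank_add_finrank_le_of_disjoint hdisj
    have hsplit : #{i | d i < 0} + #{i | ¬ d i < 0} = Fintype.card n :=
      card_filter_add_card_filter_not _
    rw [finrank_fintype_fun_eq_card] at hsum
    omega

namespace IsNegIndex

variable {M : Matrix n n ℝ} {k k' : ℕ}

section Rectangular

variable [Fintype m] {L : Matrix n m ℝ}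

theorem le_of_transpose_mul_mul (hL : Function.Injective L.mulVec)
    (h : IsNegIndex (Lᵀ * M * L) k) (h' : IsNegIndex M k') : k ≤ k' := by
  obtain ⟨W, hW, hkW⟩ := h.1
  have hrank : finrank ℝ (W.map L.mulVecLin) = finrank ℝ W :=
    (Submodule.equivMapOfInjective _ hL W).finrank_eq.symm
  have := h'.2 _ hW.map
  omega

theorem add_card_le_of_transpose_mul_mul (hL : Function.Injective L.mulVec)
    (h : IsNegIndex (Lᵀ * M * L) k) (h' : IsNegIndex M k') :
    k' + Fintype.card m ≤ k + Fintype.card n := by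
  obtain ⟨W, hW, hkW⟩ := h'.1
  have hrank := Submodule.finrank_add_finrank_le_finrank_comap_add L.mulVecLin W
  have := h.2 _ (hW.comap hL)
  simp only [finrank_fintype_fun_eq_card] at hrank
  omega

end Rectangular

theorem transpose_mul_mul [DecidableEq n] {L : Matrix n n ℝ} (hL : IsUnit L)
    (h : IsNegIndex M k) : IsNegIndex (Lᵀ * M * L) k := by
  have hinj : Function.Injective L.mulVec := mulVec_injective_iff_isUnit.2 hL
  refine ⟨?_, fun W hW => ?_⟩
  · obtain ⟨W, hW, hkW⟩ := h.1
    have hrank := Submodule.finrank_add_finrank_le_finrank_comap_add L.mulVecLin W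
    exact ⟨_, hW.comap hinj, by omega⟩
  · have hrank : finrank ℝ (W.map L.mulVecLin) = finrank ℝ W :=
      (Submodule.equivMapOfInjective _ hinj W).finrank_eq.symm
    have := h.2 _ hW.map
    omega

/-- Cauchy interlacing, in the form of the inertia of a principal submatrix. -/
theorem le_and_add_card_le_of_submatrix [Fintype m] [DecidableEq m] [DecidableEq n]
    {f : m → n} (hf : Function.Injective f) (h : IsNegIndex (M.submatrix f f) k)
    (h' : IsNegIndex M k') : k ≤ k' ∧ k' + Fintype.card m ≤ k + Fintype.card n := by
  rw [← transpose_mul_mul_submatrix_one] at h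
  exact ⟨h.le_of_transpose_mul_mul (mulVec_submatrix_one_injective hf) h',
    h.add_card_le_of_transpose_mul_mul (mulVec_submatrix_one_injective hf) h'⟩

end IsNegIndex

theorem IsHermitian.isNegIndex_smul_one_sub [DecidableEq n] {A : Matrix n n ℝ}
    (hA : A.IsHermitian) (μ : ℝ) : IsNegIndex (μ • 1 - A) #{i | μ < hA.eigenvalues i} := by
  set U : Matrix n n ℝ := (hA.eigenvectorUnitary : Matrix n n ℝ)
  have hUU : U * Uᵀ = 1 := by
    simpa [U, star_eq_conjTranspose, conjTranspose_eq_transpose_of_trivial] using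
      Unitary.coe_mul_star_self hA.eigenvectorUnitary
  have hspec : A = U * diagonal hA.eigenvalues * Uᵀ := by
    simpa [U, Unitary.conjStarAlgAut_apply, star_eq_conjTranspose,
      conjTranspose_eq_transpose_of_trivial] using hA.spectral_theorem
  have hcongr : μ • 1 - A = Uᵀᵀ * diagonal (fun i => μ - hA.eigenvalues i) * Uᵀ := by
    rw [transpose_transpose, ← diagonal_sub, ← smul_one_eq_diagonal, Matrix.mul_sub,
      Matrix.sub_mul, Matrix.mul_smul, Matrix.mul_one, Matrix.smul_mul, hUU, ← hspec]
  have hunit : IsUnit Uᵀ := ⟨⟨Uᵀ, U, mul_eq_one_comm.1 hUU, hUU⟩, rfl⟩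
  rw [hcongr]
  convert (isNegIndex_diagonal _).transpose_mul_mul hunit using 2
  simp [sub_neg]

open scoped MatrixOrder in
theorem PosDef.exists_isUnit_eq_transpose_mul_self [DecidableEq n] {P : Matrix n n ℝ}
    (hP : P.PosDef) : ∃ R : Matrix n n ℝ, IsUnit R ∧ P = Rᵀ * R := by
  obtain ⟨R, hR, h⟩ :=
    CStarAlgebra.isStrictlyPositive_iff_eq_star_mul_self.mp hP.isStrictlyPositive
  exact ⟨R, hR, by rw [h, star_eq_conjTranspose, conjTranspose_eq_transpose_of_trivial]⟩

theorem isNegIndex_smul_sub_of_charpoly_mul_inv [DecidableEq n] {P Q : Matrix n n ℝ}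
    (hP : P.PosDef) (hQ : Q.IsHermitian) {e : n → ℝ}
    (hc : (Q * P⁻¹).charpoly = ∏ i, (X - C (e i))) (μ : ℝ) :
    IsNegIndex (μ • P - Q) #{i | μ < e i} := by
  obtain ⟨R, hR, rfl⟩ := hP.exists_isUnit_eq_transpose_mul_self
  have hRR : R⁻¹ * R = 1 := nonsing_inv_mul R ((isUnit_iff_isUnit_det R).1 hR)
  set A := R⁻¹ᵀ * Q * R⁻¹
  have hA : A.IsHermitian := by
    simpa [A, conjTranspose_eq_transpose_of_trivial] using
      isHermitian_conjTranspose_mul_mul R⁻¹ hQ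
  have hcongr : μ • (Rᵀ * R) - Q = Rᵀ * (μ • 1 - A) * R := by
    have hAQ : Rᵀ * A * R = Q :=
      calc Rᵀ * A * R = (R⁻¹ * R)ᵀ * Q * (R⁻¹ * R) := by
            simp only [A, transpose_mul, Matrix.mul_assoc]
        _ = Q := by rw [hRR, transpose_one, Matrix.one_mul, Matrix.mul_one]
    rw [Matrix.mul_sub, Matrix.sub_mul, Matrix.mul_smul, Matrix.mul_one, Matrix.smul_mul, hAQ]
  have hcharpoly : A.charpoly = (Q * (Rᵀ * R)⁻¹).charpoly := by
    rw [Matrix.mul_inv_rev, ← transpose_nonsing_inv, ← Matrix.mul_assoc,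
      charpoly_mul_comm (Q * R⁻¹), ← Matrix.mul_assoc]
  have hcount : #{i | μ < e i} = #{i | μ < hA.eigenvalues i} := by
    refine card_filter_eq_of_prod_X_sub_C_eq ?_ _
    rw [← hc, ← hcharpoly, hA.charpoly_eq]
    simp
  rw [hcongr, hcount]
  exact (hA.isNegIndex_smul_one_sub μ).transpose_mul_mul hR

end Matrix

theorem stmt_14 (N : ℕ) (A' B' : Matrix (Fin (N+1)) (Fin (N+1)) ℝ)
    (hA : A'.PosDef) (hB : B'.PosDef)
    (e1 : Fin (N+1) → ℝ) (e2 : Fin N → ℝ)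
    (h1 : Monotone e1) (h2 : Monotone e2)
    (hc1 : (A' * B'⁻¹).charpoly = ∏ i, (Polynomial.X - Polynomial.C (e1 i)))
    (hc2 : ((A'.submatrix Fin.castSucc Fin.castSucc)
        * (B'.submatrix Fin.castSucc Fin.castSucc)⁻¹).charpoly
      = ∏ i, (Polynomial.X - Polynomial.C (e2 i))) :
    ∀ k : Fin N, e1 k.castSucc ≤ e2 k ∧ e2 k ≤ e1 k.succ := by
  have interlace (μ : ℝ) :
      #{j | μ < e2 j} ≤ #{i | μ < e1 i} ∧ #{i | μ < e1 i} + N ≤ #{j | μ < e2 j} + (N + 1) := by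
    have h := isNegIndex_smul_sub_of_charpoly_mul_inv
      (hB.submatrix (Fin.castSucc_injective N)) (hA.isHermitian.submatrix _) hc2 μ
    simpa using IsNegIndex.le_and_add_card_le_of_submatrix (M := μ • B' - A')
      (Fin.castSucc_injective N) h
      (isNegIndex_smul_sub_of_charpoly_mul_inv hB hA.isHermitian hc1 μ)
  intro k
  constructor
  · by_contra! h
    have hk1 := h1.le_card_filter_lt_add_of_lt h
    have hk2 := h2.card_filter_lt_add_lt_of_le (le_refl (e2 k))
    have := interlace (e2 k)
    simp only [Fin.val_castSucc] at hk1
    omega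
  · by_contra! h
    have hk1 := h1.card_filter_lt_add_lt_of_le (le_refl (e1 k.succ))
    have hk2 := h2.le_card_filter_lt_add_of_lt h
    have := interlace (e1 k.succ)
    simp only [Fin.val_succ] at hk1
    omega
end

section
/- Monotone selection lemma: let g: (0,∞) → ℝ satisfy g(1)=0, g decreasing on (0,1], increasing on [1,∞). Let ν₁^{(1)} ≤ ν₁^{(2)} ≤ ν₂^{(1)} ≤ ν₂^{(2)} ≤ … ≤ ν_{N−1}^{(1)} ≤ ν_{N−1}^{(2)} ≤ ν_N^{(1)} be interlacing positive sequences. Then there exists an (N−1)-element subset {μ_i} of {ν_i^{(1)}} with ∑_{i=1}^{N−1} g(μ_i) ≥ ∑_{i=1}^{N−1} g(ν_i^{(2)}); specifically one may take μ_i = ν_{i+1}^{(1)} whenever ν_i^{(2)} ≥ 1 and μ_i = ν_i^{(1)} whenever ν_i^{(2)} < 1. -/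
theorem stmt_15 (N : ℕ) (g : ℝ → ℝ) (hg1 : g 1 = 0)
    (hdec : AntitoneOn g (Set.Ioc 0 1)) (hinc : MonotoneOn g (Set.Ici 1))
    (a : Fin (N+1) → ℝ) (b : Fin N → ℝ)
    (hapos : ∀ i, 0 < a i) (hbpos : ∀ i, 0 < b i)
    (hinter : ∀ i : Fin N, a i.castSucc ≤ b i ∧ b i ≤ a i.succ) :
    ∑ i : Fin N, g (b i)
      ≤ ∑ i : Fin N, g (if 1 ≤ b i then a i.succ else a i.castSucc) := by
  apply Finset.sum_le_sum
  intro i _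
  by_cases h : 1 ≤ b i
  · simp only [h, if_true]
    exact hinc h (le_trans h (hinter i).2) (hinter i).2
  · simp only [h, if_false]
    push_neg at h
    exact hdec ⟨hapos _, le_trans (hinter i).1 h.le⟩ ⟨hbpos i, h.le⟩ (hinter i).1
end
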